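/- The optimal schedule for the lower-bound multicast instance M_𝒮 with parameters C (even) and D requires at least C·D/2 rounds: for every valid schedule, some multicast tree fails to deliver its packet to all its leaves before round C·D/2. -/

import Mathlib

/-- The graph induced by a label `χ`: edges carrying `χ` in their label set. -/
def labelGraph {V L : Type*} (lab : V → V → Finset L) (χ : L) : SimpleGraph V where
  Adj u v := u ≠ v ∧ (χ ∈ lab u v ∨ χ ∈ lab v u)
  symm := ⟨fun u v h => ⟨h.1.symm, h.2.symm⟩⟩
  loopless := ⟨fun v h => h.1 rfl⟩

/-- The vertices of the multicast tree of label `χ`: its root together with all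
vertices incident to an edge carrying `χ`. -/
def labelSupp {V L : Type*} (lab : V → V → Finset L) (root : L → V) (χ : L) : Set V :=
  {v | v = root χ ∨ ∃ u, (labelGraph lab χ).Adj v u}

/-- A store-and-forward schedule for a simultaneous multicast instance: in each
synchronous round at most one packet crosses each edge, packet `m_χ` (initially known
only to `root χ`) may only traverse edges of its tree (edges whose label set contains
`χ`), and nodes may copy packets. `knows t χ` is the set of vertices knowing `m_χ`
after `t` rounds, and `send t u v` is the packet sent from `u` to `v` in round `t+1`. -/
structure Schedule (V L : Type*) (lab : V → V → Finset L) (root : L → V) where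
  knows : ℕ → L → Set V
  send : ℕ → V → V → Option L
  init : ∀ χ, knows 0 χ = {root χ}
  send_mem : ∀ t u v χ, send t u v = some χ → χ ∈ lab u v ∧ u ∈ knows t χ
  one_per_edge : ∀ t u v, (send t u v).isSome → send t v u = none
  step : ∀ t χ, knows (t+1) χ = knows t χ ∪ {v | ∃ u, send t u v = some χ}

/-- A schedule has length at most `T` (solves the instance within `T` rounds) if
after `T` rounds every vertex of every multicast tree — in particular every leaf —
knows the corresponding packet. -/
def Schedule.Solves {V L : Type*} {lab : V → V → Finset L} {root : L → V}
    (S : Schedule V L lab root) (T : ℕ) : Prop :=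
  ∀ χ v, v ∈ labelSupp lab root χ → v ∈ S.knows T χ
section LowerBoundConstruction

variable {L : Type} [DecidableEq L]

open scoped Classical

/-- The ways of "guessing" delayed trees: for each adjacent pair
`(S (2i), S (2i+1))` of label sets, a choice of `C/2` labels from each. -/
def Choices (C m : ℕ) (S : Fin (2 * m) → Finset L) : Type :=
  { f : Fin m → Finset L × Finset L //
    ∀ i : Fin m,
      (f i).1 ⊆ S ⟨2 * i.1, by have := i.isLt; omega⟩ ∧ (f i).1.card = C / 2 ∧
      (f i).2 ⊆ S ⟨2 * i.1 + 1, by have := i.isLt; omega⟩ ∧ (f i).2.card = C / 2 }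

/-- The interleaved tuple `𝒮' ∈ I(𝒮)` corresponding to a choice. -/
def mergeS {C m : ℕ} {S : Fin (2 * m) → Finset L} (f : Choices C m S) :
    Fin m → Finset L := fun i => (f.1 i).1 ∪ (f.1 i).2

def reidx {d : ℕ} (S : Fin (2 ^ (d + 1)) → Finset L) : Fin (2 * 2 ^ d) → Finset L :=
  fun j => S ⟨j.1, by
    have h1 := j.isLt
    have h2 : 2 * 2 ^ d = 2 ^ (d + 1) := by rw [pow_succ, Nat.mul_comm]
    omega⟩

/-- Non-root vertices of the lower-bound instance `M_𝒮` (recursion level `d`,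
dilation `d+1`): for `d = 0` the single vertex `v`; for `d+1` the vertices `v_i`
(the identified roots of the sub-instances) together with, for each guess
`𝒮' ∈ I(𝒮)`, the non-root vertices of `M_𝒮'`. -/
def NRv (C : ℕ) : (d : ℕ) → (Fin (2 ^ d) → Finset L) → Type :=
  Nat.rec (motive := fun d => (Fin (2 ^ d) → Finset L) → Type)
    (fun _ => PUnit)
    (fun d ih S => Fin (2 ^ d) ⊕ (Σ f : Choices C (2 ^ d) (reidx S), ih (mergeS f)))

/-- All vertices of `M_𝒮`: the roots `r_j` together with the non-root vertices. -/
def Vx (C d : ℕ) (S : Fin (2 ^ d) → Finset L) : Type := Fin (2 ^ d) ⊕ NRv C d S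

/-- The labels carried by each edge of `G_𝒮` (`∅` meaning "no edge"): for `d = 0` a
single edge `(r, v)` carrying all labels of `S 0`; for `d + 1`, root edges
`(r_j, v_{⌊j/2⌋})` carrying `S j`, together with the edges of all sub-instances
`M_𝒮'`, `𝒮' ∈ I(𝒮)`, whose roots are identified with the vertices `v_i`. -/
noncomputable def labv (C : ℕ) : (d : ℕ) → (S : Fin (2 ^ d) → Finset L) →
    Vx C d S → Vx C d S → Finset L
  | 0, S, Sum.inl _, Sum.inr _ => S ⟨0, Nat.one_pos⟩
  | 0, S, Sum.inr _, Sum.inl _ => S ⟨0, Nat.one_pos⟩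
  | 0, _, _, _ => ∅
  | d + 1, S, u, v =>
    match u, v with
    | Sum.inl j, Sum.inr (Sum.inl i) => if j.1 / 2 = i.1 then S j else ∅
    | Sum.inr (Sum.inl i), Sum.inl j => if j.1 / 2 = i.1 then S j else ∅
    | Sum.inr (Sum.inl i), Sum.inr (Sum.inr ⟨f, y⟩) =>
        labv C d (mergeS f) (Sum.inl i) (Sum.inr y)
    | Sum.inr (Sum.inr ⟨f, y⟩), Sum.inr (Sum.inl i) =>
        labv C d (mergeS f) (Sum.inr y) (Sum.inl i)
    | Sum.inr (Sum.inr ⟨f, y⟩), Sum.inr (Sum.inr ⟨f', y'⟩) =>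
        if h : f = f' then labv C d (mergeS f') (Sum.inr (h ▸ y)) (Sum.inr y') else ∅
    | _, _ => ∅

/-- The root of the multicast tree of label `χ`: the root vertex `r_j` for the
(unique) `j` with `χ ∈ S j`. -/
noncomputable def rootV (C d : ℕ) (S : Fin (2 ^ d) → Finset L) (χ : L) : Vx C d S :=
  Sum.inl (if h : ∃ j, χ ∈ S j then h.choose else ⟨0, Nat.two_pow_pos d⟩)

end LowerBoundConstruction

/-!
Every root edge of `M_𝒮` carries the `C` packets of one `S j`, and at most one packet crosses
it per round, so after `C/2` rounds at least `C/2` packets of each `S j` are still known only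
at their root. Choosing `C/2` of them for each `j` yields an `𝒮' ∈ I(𝒮)` whose embedded copy
of `M_{𝒮'}` has received nothing by round `C/2`; as a tree of `𝒮'` can enter that copy only
at its root, the schedule from round `C/2` on, restricted to the copy, solves `M_{𝒮'}`.
Induction on the depth gives `T ≥ (d + 2) · C/2`, the base case being a single edge with `C`
packets.
-/

namespace Schedule

variable {V V' L : Type*} {lab : V → V → Finset L} {root : L → V}

theorem knows_mono (Sch : Schedule V L lab root) (χ : L) : Monotone (Sch.knows · χ) :=
  monotone_nat_of_le_succ fun t => by rw [Sch.step]; exact Set.subset_union_left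

theorem card_le_of_sent (Sch : Schedule V L lab root) {u v : V} {t₀ : ℕ} {A : Finset L}
    (hA : ∀ χ ∈ A, ∃ t < t₀, Sch.send t u v = some χ) : A.card ≤ t₀ := by
  classical
  calc A.card = (A.image some).card :=
        (Finset.card_image_of_injective _ (Option.some_injective L)).symm
    _ ≤ ((Finset.range t₀).image (Sch.send · u v)).card := by
        refine Finset.card_le_card fun o ho => ?_
        obtain ⟨χ, hχ, rfl⟩ := Finset.mem_image.1 ho
        obtain ⟨t, ht, hs⟩ := hA χ hχ
        exact Finset.mem_image.2 ⟨t, Finset.mem_range.2 ht, hs⟩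
    _ ≤ t₀ := Finset.card_image_le.trans (Finset.card_range t₀).le

theorem knows_subset_root (Sch : Schedule V L lab root) {χ : L} {t₀ : ℕ}
    (hsilent : ∀ t < t₀, ∀ v, Sch.send t (root χ) v ≠ some χ) :
    ∀ t ≤ t₀, Sch.knows t χ ⊆ {root χ} := by
  intro t
  induction t with
  | zero => intro _; rw [Sch.init]
  | succ t ih =>
    intro ht
    rw [Sch.step]
    rintro w (hw | ⟨u, hu⟩)
    · exact ih (by omega) hw
    · obtain rfl : u = root χ := ih (by omega) (Sch.send_mem _ _ _ _ hu).2
      exact absurd hu (hsilent t (by omega) w)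

/-- Markov-type counting: at most `t₀` packets of `A` can cross the single edge leaving `r`
in the first `t₀` rounds, so at least `|A| - t₀` of them are still only known at `r`. -/
theorem exists_delayed (Sch : Schedule V L lab root) {A : Finset L} {r nb : V}
    (hroot : ∀ χ ∈ A, root χ = r) (hnb : ∀ χ ∈ A, ∀ v, χ ∈ lab r v → v = nb) (t₀ : ℕ) :
    ∃ B ⊆ A, A.card - t₀ ≤ B.card ∧ ∀ χ ∈ B, Sch.knows t₀ χ ⊆ {r} := by
  classical
  let silent χ := ∀ t < t₀, Sch.send t r nb ≠ some χ
  have hsent : (A.filter fun χ => ¬silent χ).card ≤ t₀ :=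
    Sch.card_le_of_sent fun χ hχ => by simpa [silent] using (Finset.mem_filter.1 hχ).2
  have hsplit := Finset.card_filter_add_card_filter_not (s := A) silent
  refine ⟨A.filter silent, Finset.filter_subset _ _, by omega, fun χ hχ => ?_⟩
  obtain ⟨hχA, hχ⟩ := Finset.mem_filter.1 hχ
  rw [← hroot χ hχA]
  refine Sch.knows_subset_root (fun t ht v hs => ?_) t₀ le_rfl
  rw [hroot χ hχA] at hs
  obtain rfl := hnb χ hχA v (Sch.send_mem _ _ _ _ hs).1
  exact hχ t ht hs

theorem Solves.card_le {Sch : Schedule V L lab root} {T : ℕ} (hsolves : Sch.Solves T)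
    {A : Finset L} {r nb : V} (hroot : ∀ χ ∈ A, root χ = r)
    (hnb : ∀ χ ∈ A, ∀ v, χ ∈ lab r v → v = nb) (hadj : ∀ χ ∈ A, χ ∈ lab r nb)
    (hne : nb ≠ r) : A.card ≤ T := by
  obtain ⟨B, hBA, hB, hBr⟩ := Sch.exists_delayed hroot hnb T
  suffices B = ∅ by simp [this] at hB; omega
  refine Finset.eq_empty_of_forall_notMem fun χ hχ => hne (hBr χ hχ (hsolves χ nb ?_))
  exact Or.inr ⟨r, hne, Or.inr (hadj χ (hBA hχ))⟩

variable {lab' : V' → V' → Finset L} {root' : L → V'}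
  (Sch : Schedule V L lab root) (φ : V' → V) (s : ℕ) (P : L → Prop)
  (hlab : ∀ u v, lab (φ u) (φ v) = lab' u v) (hP : ∀ u v χ, χ ∈ lab' u v → P χ)
  (hentry : ∀ χ u w, P χ → χ ∈ lab u (φ w) → (∃ u', u = φ u') ∨ w = root' χ)
  (hstart : ∀ χ w, P χ → φ w ∈ Sch.knows s χ → w = root' χ)

/-- `Sch` from round `s` on, seen inside the image of `φ`. It is a schedule of the
sub-instance because the trees of `P` enter the image only at their roots (`hentry`) and have
not reached it by round `s` (`hstart`). -/
def restrict : Schedule V' L lab' root' where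
  knows t χ := {w | w = root' χ ∨ P χ ∧ φ w ∈ Sch.knows (t + s) χ}
  send t u v := Sch.send (t + s) (φ u) (φ v)
  init χ := by
    ext w
    simp only [Set.mem_ofPred_eq, Nat.zero_add, Set.mem_singleton_iff, or_iff_left_iff_imp]
    exact fun h => hstart χ w h.1 h.2
  send_mem t u v χ h := by
    have hl : χ ∈ lab' u v := hlab u v ▸ (Sch.send_mem _ _ _ _ h).1
    exact ⟨hl, Or.inr ⟨hP u v χ hl, (Sch.send_mem _ _ _ _ h).2⟩⟩
  one_per_edge t u v := Sch.one_per_edge _ _ _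
  step t χ := by
    ext w
    simp only [Set.mem_ofPred_eq, Set.mem_union, Nat.add_right_comm t 1 s, Sch.step]
    constructor
    · rintro (rfl | ⟨hχ, hw | ⟨u, hu⟩⟩)
      · exact Or.inl (Or.inl rfl)
      · exact Or.inl (Or.inr ⟨hχ, hw⟩)
      · rcases hentry χ u w hχ (Sch.send_mem _ _ _ _ hu).1 with ⟨u', rfl⟩ | rfl
        · exact Or.inr ⟨u', hu⟩
        · exact Or.inl (Or.inl rfl)
    · rintro ((rfl | ⟨hχ, hw⟩) | ⟨u', hu⟩)
      · exact Or.inl rfl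
      · exact Or.inr ⟨hχ, Or.inl hw⟩
      · have hl : χ ∈ lab' u' w := hlab u' w ▸ (Sch.send_mem _ _ _ _ hu).1
        exact Or.inr ⟨hP u' w χ hl, Or.inr ⟨φ u', hu⟩⟩

variable {Sch φ} in
theorem Solves.restrict {T : ℕ} (hsolves : Sch.Solves T) (hφ : Function.Injective φ) :
    (Sch.restrict φ s P hlab hP hentry hstart).Solves (T - s) := by
  rintro χ w (rfl | ⟨u, hne, hwu⟩)
  · exact Or.inl rfl
  refine Or.inr ⟨hwu.elim (hP w u χ) (hP u w χ), Sch.knows_mono χ (by omega : T ≤ T - s + s) ?_⟩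
  refine hsolves χ (φ w) (Or.inr ⟨φ u, hφ.ne hne, ?_⟩)
  rwa [hlab, hlab]

end Schedule

section Construction

open Function

variable {L : Type} [DecidableEq L] {C : ℕ}

def emb {d : ℕ} {S : Fin (2 ^ (d + 1)) → Finset L} (f : Choices C (2 ^ d) (reidx S)) :
    Vx C d (mergeS f) → Vx C (d + 1) S
  | Sum.inl i => Sum.inr (Sum.inl i)
  | Sum.inr y => Sum.inr (Sum.inr ⟨f, y⟩)

variable {d : ℕ}

theorem emb_injective {S : Fin (2 ^ (d + 1)) → Finset L} (f : Choices C (2 ^ d) (reidx S)) :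
    Injective (emb f) := by
  rintro (i | y) (i' | y') ⟨⟩ <;> rfl

theorem emb_ne_inl {S : Fin (2 ^ (d + 1)) → Finset L} (f : Choices C (2 ^ d) (reidx S))
    (w : Vx C d (mergeS f)) (j : Fin (2 ^ (d + 1))) : emb f w ≠ Sum.inl j := by
  cases w <;> exact Sum.inr_ne_inl

theorem labv_inl_inl : ∀ {d : ℕ} (S : Fin (2 ^ d) → Finset L) (j j' : Fin (2 ^ d)),
    labv C d S (Sum.inl j) (Sum.inl j') = ∅
  | 0, _, _, _ | _ + 1, _, _, _ => rfl

theorem labv_emb {S : Fin (2 ^ (d + 1)) → Finset L} (f : Choices C (2 ^ d) (reidx S))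
    (u v : Vx C d (mergeS f)) :
    labv C (d + 1) S (emb f u) (emb f v) = labv C d (mergeS f) u v := by
  rcases u with i | y <;> rcases v with i' | y' <;> simp [emb, labv, labv_inl_inl]

theorem two_mul_add_one_lt_two_pow_succ (i : Fin (2 ^ d)) : 2 * i.1 + 1 < 2 ^ (d + 1) := by
  have := i.2; rw [pow_succ]; omega

theorem mem_mergeS {S : Fin (2 ^ (d + 1)) → Finset L} {f : Choices C (2 ^ d) (reidx S)}
    {χ : L} {i : Fin (2 ^ d)} (h : χ ∈ mergeS f i) :
    ∃ j : Fin (2 ^ (d + 1)), χ ∈ S j ∧ j.1 / 2 = i.1 := by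
  have hi := two_mul_add_one_lt_two_pow_succ i
  rcases Finset.mem_union.1 h with h | h
  · exact ⟨⟨2 * i.1, by omega⟩, (f.2 i).1 h, by simp⟩
  · exact ⟨⟨2 * i.1 + 1, hi⟩, (f.2 i).2.2.1 h, by simp; omega⟩

theorem card_mergeS (hC : Even C) {S : Fin (2 ^ (d + 1)) → Finset L}
    (hdisj : Pairwise (Disjoint on S)) (f : Choices C (2 ^ d) (reidx S)) (i : Fin (2 ^ d)) :
    (mergeS f i).card = C := by
  obtain ⟨h₁, hc₁, h₂, hc₂⟩ := f.2 i
  have hi := two_mul_add_one_lt_two_pow_succ i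
  have hne : (⟨2 * i.1, by omega⟩ : Fin (2 ^ (d + 1))) ≠ ⟨2 * i.1 + 1, hi⟩ := by
    simp [Fin.ext_iff]
  rw [mergeS, Finset.card_union_of_disjoint ((hdisj hne).mono h₁ h₂), hc₁, hc₂,
    ← two_mul, Nat.two_mul_div_two_of_even hC]

theorem pairwise_disjoint_mergeS {S : Fin (2 ^ (d + 1)) → Finset L}
    (hdisj : Pairwise (Disjoint on S)) (f : Choices C (2 ^ d) (reidx S)) :
    Pairwise (Disjoint on mergeS f) := by
  refine fun i i' hne => Finset.disjoint_left.2 fun χ h h' => hne ?_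
  obtain ⟨j, hj, hji⟩ := mem_mergeS h
  obtain ⟨j', hj', hj'i'⟩ := mem_mergeS h'
  obtain rfl := hdisj.eq (Finset.not_disjoint_iff.2 ⟨χ, hj, hj'⟩)
  exact Fin.ext (hji.symm.trans hj'i')

theorem rootV_eq {S : Fin (2 ^ d) → Finset L} (hdisj : Pairwise (Disjoint on S)) {χ : L}
    {j : Fin (2 ^ d)} (hχ : χ ∈ S j) : rootV C d S χ = Sum.inl j := by
  have hex : ∃ j, χ ∈ S j := ⟨j, hχ⟩
  rw [rootV, dif_pos hex, hdisj.eq (Finset.not_disjoint_iff.2 ⟨χ, hex.choose_spec, hχ⟩)]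

theorem exists_mem_of_mem_labv : ∀ {d : ℕ} {S : Fin (2 ^ d) → Finset L} {u v : Vx C d S}
    {χ : L}, χ ∈ labv C d S u v → ∃ j, χ ∈ S j
  | 0, S, u, v, χ, h => by
    rcases u with _ | _ <;> rcases v with _ | _ <;> simp [labv] at h <;> exact ⟨_, h⟩
  | d + 1, S, u, v, χ, h => by
    have of_sub {f : Choices C (2 ^ d) (reidx S)} {u v} (h : χ ∈ labv C d (mergeS f) u v) :
        ∃ j, χ ∈ S j :=
      have ⟨_, hi⟩ := exists_mem_of_mem_labv h
      have ⟨j, hj, _⟩ := mem_mergeS hi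
      ⟨j, hj⟩
    rcases u with j | i | ⟨f, y⟩ <;> rcases v with j' | i' | ⟨f', y'⟩ <;>
      simp only [labv] at h <;> (try split_ifs at h) <;>
      first | exact ⟨_, h⟩ | exact of_sub h | simp at h

theorem mem_of_mem_labv_inl_right {S : Fin (2 ^ d) → Finset L} {u : Vx C d S} {j : Fin (2 ^ d)}
    {χ : L} (h : χ ∈ labv C d S u (Sum.inl j)) : χ ∈ S j := by
  cases d with
  | zero =>
    obtain rfl : j = 0 := Subsingleton.elim (α := Fin 1) _ _
    rcases u with _ | _ <;> simp [labv] at h ⊢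
    exact h
  | succ d =>
    rcases u with j' | i | ⟨f, y⟩ <;> simp [labv] at h
    split_ifs at h <;> simp_all

def rootNbr (C : ℕ) : (d : ℕ) → (S : Fin (2 ^ d) → Finset L) → Fin (2 ^ d) → Vx C d S
  | 0, _, _ => Sum.inr PUnit.unit
  | d + 1, _, j =>
    Sum.inr (Sum.inl ⟨j.1 / 2, by have : j.1 < 2 ^ d * 2 := pow_succ 2 d ▸ j.2; omega⟩)

theorem mem_labv_inl_iff {S : Fin (2 ^ d) → Finset L} {j : Fin (2 ^ d)} {v : Vx C d S} {χ : L} :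
    χ ∈ labv C d S (Sum.inl j) v ↔ v = rootNbr C d S j ∧ χ ∈ S j := by
  cases d with
  | zero =>
    obtain rfl : j = 0 := Subsingleton.elim (α := Fin 1) _ _
    rcases v with _ | _ <;> simp [labv, rootNbr, Vx, NRv]
    exact fun _ => rfl
  | succ d =>
    rcases v with j' | i | ⟨f, y⟩ <;> simp [labv, rootNbr, Vx, NRv]
    split_ifs with h <;> simp [Fin.ext_iff, h]
    exact fun h' => absurd h'.symm h

theorem rootNbr_ne_inl (S : Fin (2 ^ d) → Finset L) (j j' : Fin (2 ^ d)) :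
    rootNbr C d S j ≠ Sum.inl j' := by
  cases d <;> exact Sum.inr_ne_inl

theorem eq_emb_or_eq_rootV_of_mem_labv_emb {S : Fin (2 ^ (d + 1)) → Finset L}
    (hdisj : Pairwise (Disjoint on S)) {f : Choices C (2 ^ d) (reidx S)} {χ : L}
    (hχ : ∃ i, χ ∈ mergeS f i) {u : Vx C (d + 1) S} {w : Vx C d (mergeS f)}
    (h : χ ∈ labv C (d + 1) S u (emb f w)) :
    (∃ u', u = emb f u') ∨ w = rootV C d (mergeS f) χ := by
  obtain ⟨i₀, hi₀⟩ := hχ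
  obtain ⟨j₀, hj₀, hj₀i₀⟩ := mem_mergeS hi₀
  have entry_at_root {j : Fin (2 ^ (d + 1))} {i : Fin (2 ^ d)} (hj : χ ∈ S j)
      (hji : j.1 / 2 = i.1) : Sum.inl i = rootV C d (mergeS f) χ := by
    obtain rfl := hdisj.eq (Finset.not_disjoint_iff.2 ⟨χ, hj, hj₀⟩)
    rw [rootV_eq (pairwise_disjoint_mergeS hdisj f) hi₀, Fin.ext (hji.symm.trans hj₀i₀)]
  rcases u with j | i | ⟨f', y⟩ <;> rcases w with i' | y'
  · simp only [emb, labv] at h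
    split_ifs at h with hji
    exacts [Or.inr (entry_at_root h hji), absurd h (Finset.notMem_empty χ)]
  · simp [emb, labv] at h
  · exact Or.inl ⟨Sum.inl i, rfl⟩
  · exact Or.inl ⟨Sum.inl i, rfl⟩
  · obtain ⟨j, hj, hji⟩ := mem_mergeS (mem_of_mem_labv_inl_right h)
    exact Or.inr (entry_at_root hj hji)
  · simp only [emb, labv] at h
    split_ifs at h with hf
    · subst hf
      exact Or.inl ⟨Sum.inr y, rfl⟩
    · exact absurd h (Finset.notMem_empty χ)

theorem exists_choices_delayed {S : Fin (2 ^ (d + 1)) → Finset L}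
    (hcard : ∀ j, (S j).card = C) (hdisj : Pairwise (Disjoint on S))
    (Sch : Schedule (Vx C (d + 1) S) L (labv C (d + 1) S) (rootV C (d + 1) S)) :
    ∃ f : Choices C (2 ^ d) (reidx S),
      ∀ i, ∀ χ ∈ mergeS f i, ∀ w, emb f w ∉ Sch.knows (C / 2) χ := by
  have delayed (j : Fin (2 ^ (d + 1))) :
      ∃ G ⊆ S j, G.card = C / 2 ∧ ∀ χ ∈ G, Sch.knows (C / 2) χ ⊆ {Sum.inl j} := by
    obtain ⟨B, hBS, hB, hBr⟩ := Sch.exists_delayed (fun χ hχ => rootV_eq hdisj hχ)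
      (fun χ _ v hv => (mem_labv_inl_iff.1 hv).1) (C / 2)
    obtain ⟨G, hGB, hG⟩ := Finset.exists_subset_card_eq (show C / 2 ≤ B.card by grind)
    exact ⟨G, hGB.trans hBS, hG, fun χ hχ => hBr χ (hGB hχ)⟩
  have hi := two_mul_add_one_lt_two_pow_succ (d := d)
  choose G₁ hG₁S hG₁ hG₁r using
    fun i : Fin (2 ^ d) => delayed ⟨2 * i.1, by have := hi i; omega⟩
  choose G₂ hG₂S hG₂ hG₂r using fun i : Fin (2 ^ d) => delayed ⟨2 * i.1 + 1, hi i⟩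
  refine ⟨⟨fun i => (G₁ i, G₂ i), fun i => ⟨hG₁S i, hG₁ i, hG₂S i, hG₂ i⟩⟩, fun i χ hχ w hw => ?_⟩
  rcases Finset.mem_union.1 hχ with h | h
  · exact emb_ne_inl _ w _ (hG₁r i χ h hw)
  · exact emb_ne_inl _ w _ (hG₂r i χ h hw)

theorem Schedule.Solves.mul_add_two_le_two_mul (hC : Even C) {S : Fin (2 ^ d) → Finset L}
    (hcard : ∀ j, (S j).card = C) (hdisj : Pairwise (Disjoint on S))
    {Sch : Schedule (Vx C d S) L (labv C d S) (rootV C d S)} {T : ℕ} (hsolves : Sch.Solves T) :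
    C * (d + 2) ≤ 2 * T := by
  induction d generalizing T with
  | zero =>
    have := hsolves.card_le (A := S 0) (fun χ hχ => rootV_eq hdisj hχ)
      (fun χ _ v hv => (mem_labv_inl_iff.1 hv).1) (fun χ hχ => mem_labv_inl_iff.2 ⟨rfl, hχ⟩)
      (rootNbr_ne_inl S 0 0)
    rw [hcard] at this
    omega
  | succ d ih =>
    obtain ⟨f, hf⟩ := exists_choices_delayed hcard hdisj Sch
    have hsub := hsolves.restrict (C / 2) (fun χ => ∃ i, χ ∈ mergeS f i) (labv_emb f)
      (fun _ _ _ h => exists_mem_of_mem_labv h)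
      (fun _ _ _ hχ h => eq_emb_or_eq_rootV_of_mem_labv_emb hdisj hχ h)
      (fun χ w ⟨i, hχ⟩ hw => (hf i χ hχ w hw).elim) (emb_injective f)
    have hsub_length := ih (card_mergeS hC hdisj f) (pairwise_disjoint_mergeS hdisj f) hsub
    have := Nat.div_two_mul_two_of_even hC
    have : C ≤ C * (d + 2) := Nat.le_mul_of_pos_right C (by omega)
    rw [show C * (d + 1 + 2) = C * (d + 2) + C by ring]
    omega

end Construction

theorem lower_bound_instance_schedule_length_general
    {L : Type} [DecidableEq L] (C d : ℕ) (hCeven : Even C)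
    (S : Fin (2 ^ d) → Finset L)
    (hcard : ∀ j, (S j).card = C)
    (hdisj : ∀ j j', j ≠ j' → Disjoint (S j) (S j'))
    (Sch : Schedule (Vx C d S) L (labv C d S) (rootV C d S)) (T : ℕ)
    (hsolves : Sch.Solves T) :
    C * (d + 1) ≤ 2 * T :=
  (Nat.mul_le_mul_left C (by omega)).trans (hsolves.mul_add_two_le_two_mul hCeven hcard hdisj)

/-- The optimal schedule for the lower-bound multicast instance
`M_𝒮` with parameters `C` (even, positive) and `D = d + 1` requires at least
`C·D/2` rounds: every valid store-and-forward schedule that delivers every packet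
`m_χ` to all vertices of its tree (in particular to all its leaves) within `T`
rounds satisfies `C·D ≤ 2·T`; equivalently, if `T < C·D/2` some multicast tree
fails to deliver its packet to all its leaves. -/
theorem lower_bound_instance_schedule_length
    {L : Type} [DecidableEq L] (C d : ℕ) (hCeven : Even C) (hCpos : 0 < C)
    (S : Fin (2 ^ d) → Finset L)
    (hcard : ∀ j, (S j).card = C)
    (hdisj : ∀ j j', j ≠ j' → Disjoint (S j) (S j'))
    (Sch : Schedule (Vx C d S) L (labv C d S) (rootV C d S)) (T : ℕ)
    (hsolves : Sch.Solves T) :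
    C * (d + 1) ≤ 2 * T :=
  lower_bound_instance_schedule_length_general C d hCeven S hcard hdisj Sch T hsolves
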